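/- Let X be a countable Markov shift over a countably infinite alphabet, φ: X → ℝ a measurable function, and assume there exists a Gibbs state for the potential φ. Then sup φ < ∞, inf φ = -∞, and sup_{n≥1} D_n(φ) < ∞, where D_n(φ) = sup_{w∈E^n} sup_{x,y∈[w]} (S_nφ(x) - S_nφ(y)). -/

import Mathlib

open MeasureTheory Filter Topology Set
open scoped ENNReal NNReal

namespace CMS

/-! ### Generic dynamical notions -/

variable {X : Type*}

/-- Birkhoff sum `S_n φ`. -/
noncomputable def birkhoff (T : X → X) (φ : X → ℝ) (n : ℕ) (x : X) : ℝ :=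
  ∑ i ∈ Finset.range n, φ (T^[i] x)

/-- A measure is invariant under `T`. -/
def Invariant [MeasurableSpace X] (T : X → X) (μ : Measure X) : Prop :=
  Measure.map T μ = μ

/-- `∫ φ dμ > -∞`, i.e. the negative part of `φ` is integrable. -/
def IntegralGtBot [MeasurableSpace X] (φ : X → ℝ) (μ : Measure X) : Prop :=
  (∫⁻ x, ENNReal.ofReal (-φ x) ∂μ) ≠ ⊤

/-- The integral of `φ`, with values in `EReal` (defined whenever one of the parts is finite). -/
noncomputable def eintegral [MeasurableSpace X] (φ : X → ℝ) (μ : Measure X) : EReal :=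
  ((∫⁻ x, ENNReal.ofReal (φ x) ∂μ : ℝ≥0∞) : EReal) -
    ((∫⁻ x, ENNReal.ofReal (-φ x) ∂μ : ℝ≥0∞) : EReal)

/-- Entropy of the countable partition induced by a map `g` with countable range. -/
noncomputable def partitionEntropy [MeasurableSpace X] {α : Type*} (μ : Measure X) (g : X → α) :
    ℝ≥0∞ :=
  ∑' a : α, ENNReal.ofReal (-((μ (g ⁻¹' {a})).toReal * Real.log ((μ (g ⁻¹' {a})).toReal)))

/-- Kolmogorov–Sinaĭ entropy of `T` with respect to `μ`: the supremum over finite measurable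
partitions (coded by maps `X → ℕ` with finite range) of the asymptotic entropy of iterated
joins of the partition. -/
noncomputable def entropy [MeasurableSpace X] (T : X → X) (μ : Measure X) : ℝ≥0∞ :=
  ⨆ (p : X → ℕ) (_ : Measurable p ∧ (Set.range p).Finite),
    atTop.liminf fun n : ℕ =>
      ENNReal.ofReal ((n : ℝ)⁻¹) * partitionEntropy μ (fun x => fun i : Fin n => p (T^[i] x))

/-- The empirical measure `δ_x^n = (1/n) ∑_{i<n} δ_{T^i x}` (with junk convention `n = 0 ↦ n = 1`,
irrelevant since only `n ≥ 1` is ever used). -/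
noncomputable def empirical [MeasurableSpace X] (T : X → X) (x : X) (n : ℕ) :
    ProbabilityMeasure X :=
  ⟨((max n 1 : ℕ) : ℝ≥0∞)⁻¹ • ∑ i ∈ Finset.range (max n 1), Measure.dirac (T^[i] x), by
    refine ⟨?_⟩
    have h1 : (∑ i ∈ Finset.range (max n 1), Measure.dirac (T^[i] x)) Set.univ
        = ((max n 1 : ℕ) : ℝ≥0∞) := by
      rw [Measure.finset_sum_apply]
      simp
    rw [Measure.smul_apply, h1, smul_eq_mul, ENNReal.inv_mul_cancel] <;> simp⟩

noncomputable instance [MeasurableSpace X] [TopologicalSpace X] [OpensMeasurableSpace X] :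
    MeasurableSpace (ProbabilityMeasure X) := borel _

/-- Sets of periodic points. -/
def perSet (T : X → X) (n : ℕ) : Set X := {x | T^[n] x = x}

/-- Sets of iterated preimages of a point. -/
def preimSet (T : X → X) (n : ℕ) (y : X) : Set X := {x | T^[n] x = y}

/-- The partition function `Z_n(φ, C)` over a subset `C`. -/
noncomputable def Zfn [MeasurableSpace X] (T : X → X) (φ : X → ℝ) (n : ℕ) (C : Set X) : ℝ≥0∞ :=
  ∑' x : C, ENNReal.ofReal (Real.exp (birkhoff T φ n x))

/-- The distribution of the empirical measures under `μ`. -/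
noncomputable def empDistr [MeasurableSpace X] [TopologicalSpace X] [OpensMeasurableSpace X]
    (T : X → X) (μ : Measure X) (n : ℕ) : Measure (ProbabilityMeasure X) :=
  Measure.map (fun x => empirical T x n) μ

/-- The distribution `Z_n(φ,C)⁻¹ ∑_{x ∈ C} e^{S_nφ(x)} δ_{δ_x^n}` on the space of probability
measures, for a countable set `C` (of weighted periodic points or iterated preimages). -/
noncomputable def weightedDistr [MeasurableSpace X] [TopologicalSpace X] [OpensMeasurableSpace X]
    (T : X → X) (φ : X → ℝ) (n : ℕ) (C : Set X) : Measure (ProbabilityMeasure X) :=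
  (Zfn T φ n C)⁻¹ •
    Measure.sum (fun x : C =>
      ENNReal.ofReal (Real.exp (birkhoff T φ n x)) • Measure.dirac (empirical T (x : X) n))

/-! ### Large deviations notions -/

variable {Y : Type*}

/-- The large deviation principle for a sequence of (sub)probability measures with rate
function `J`. -/
def HasLDP [TopologicalSpace Y] [MeasurableSpace Y] (μ : ℕ → Measure Y) (J : Y → EReal) : Prop :=
  (∀ G : Set Y, IsOpen G →
      -(⨅ y ∈ G, J y) ≤
        atTop.liminf fun n : ℕ => (((n : ℝ)⁻¹ : ℝ) : EReal) * ENNReal.log (μ n G)) ∧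
  (∀ K : Set Y, IsClosed K →
      atTop.limsup (fun n : ℕ => (((n : ℝ)⁻¹ : ℝ) : EReal) * ENNReal.log (μ n K)) ≤
        -(⨅ y ∈ K, J y))

/-- Exponential tightness of a sequence of measures. -/
def ExpTight [TopologicalSpace Y] [MeasurableSpace Y] (μ : ℕ → Measure Y) : Prop :=
  ∀ L : ℝ, 0 < L → ∃ K : Set Y, IsCompact K ∧
    atTop.limsup (fun n : ℕ => (((n : ℝ)⁻¹ : ℝ) : EReal) * ENNReal.log (μ n Kᶜ)) ≤ ((-L : ℝ) : EReal)

/-- A good rate function: lower semicontinuous with compact sublevel sets. -/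
def GoodRate [TopologicalSpace Y] (J : Y → EReal) : Prop :=
  LowerSemicontinuous J ∧ ∀ α : ℝ, 0 ≤ α → IsCompact {y | J y ≤ (α : EReal)}

/-- The rate function `I(μ) = - inf_{G ∋ μ} sup_G F`. -/
noncomputable def rateOf [TopologicalSpace Y] (F : Y → EReal) (μ : Y) : EReal :=
  -(⨅ (G : Set Y) (_ : IsOpen G ∧ μ ∈ G), ⨆ ν ∈ G, F ν)

/-- The convex combination `t μ + (1-t) ν` of two probability measures. -/
noncomputable def mix [MeasurableSpace X] (t : ℝ) (h0 : 0 ≤ t) (h1 : t ≤ 1)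
    (μ ν : ProbabilityMeasure X) : ProbabilityMeasure X :=
  ⟨ENNReal.ofReal t • (μ : Measure X) + ENNReal.ofReal (1 - t) • (ν : Measure X), by
    refine ⟨?_⟩
    simp only [Measure.add_apply, Measure.smul_apply, smul_eq_mul, measure_univ, mul_one]
    rw [← ENNReal.ofReal_add h0 (by linarith)]
    norm_num⟩

/-- Convexity of a rate function on probability measures. -/
def ConvexRate [MeasurableSpace X] (J : ProbabilityMeasure X → EReal) : Prop :=
  ∀ μ ν : ProbabilityMeasure X, ∀ t : ℝ, ∀ (h0 : 0 ≤ t) (h1 : t ≤ 1),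
    J (mix t h0 h1 μ ν) ≤ ((t : ℝ) : EReal) * J μ + ((1 - t : ℝ) : EReal) * J ν

-- The free energy functional `F`.
open Classical in
noncomputable def freeEnergy [MeasurableSpace X] (T : X → X) (φ : X → ℝ) (P : ℝ)
    (ν : ProbabilityMeasure X) : EReal :=
  if Invariant T (ν : Measure X) ∧ IntegralGtBot φ (ν : Measure X)
  then ((entropy T (ν : Measure X) : ℝ≥0∞) : EReal) + eintegral φ (ν : Measure X) - ((P : ℝ) : EReal)
  else ⊥

/-! ### Countable Markov shifts -/

variable {S : Type*}

/-- The topological Markov shift with alphabet `S` and transition relation `A`. -/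
def Space (A : S → S → Prop) : Type _ := {x : ℕ → S // ∀ i, A (x i) (x (i + 1))}

variable (A : S → S → Prop)

instance [TopologicalSpace S] : TopologicalSpace (Space A) :=
  inferInstanceAs (TopologicalSpace {x : ℕ → S // ∀ i, A (x i) (x (i + 1))})

noncomputable instance [TopologicalSpace S] : MeasurableSpace (Space A) := borel _

instance [TopologicalSpace S] : BorelSpace (Space A) := ⟨rfl⟩

/-- The left shift. -/
def shift : Space A → Space A := fun x => ⟨fun i => x.1 (i + 1), fun i => x.2 (i + 1)⟩

/-- Admissible words. -/
def Admissible (w : List S) : Prop := w ≠ [] ∧ w.Chain' A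

/-- The cylinder set of a word. -/
def cylinder (w : List S) : Set (Space A) := {x | ∀ i : Fin w.length, x.1 i = w.get i}

variable {A}

/-- The initial word of length `n` of a point. -/
def word (x : Space A) (n : ℕ) : List S := List.ofFn (fun i : Fin n => x.1 i)

variable (A)

/-- `μ` is a Gibbs state for the potential `φ` with constants `c₀` and `P`. -/
def IsGibbsWith [TopologicalSpace S] (φ : Space A → ℝ) (μ : Measure (Space A)) (c₀ P : ℝ) :
    Prop :=
  ∀ n : ℕ, 1 ≤ n → ∀ x : Space A,
    c₀⁻¹ * Real.exp (-(P * n) + birkhoff (shift A) φ n x)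
        ≤ (μ (cylinder A (word x n))).toReal ∧
      (μ (cylinder A (word x n))).toReal
        ≤ c₀ * Real.exp (-(P * n) + birkhoff (shift A) φ n x)

/-- `μ` is a Gibbs state for `φ`. -/
def IsGibbs [TopologicalSpace S] (φ : Space A → ℝ) (μ : Measure (Space A)) : Prop :=
  ∃ c₀ P : ℝ, 1 ≤ c₀ ∧ IsGibbsWith A φ μ c₀ P

/-- The transition matrix has no row or column identically zero. -/
def NoZeroRowCol : Prop := (∀ a : S, ∃ b, A a b) ∧ ∀ b : S, ∃ a, A a b

/-- Finite irreducibility. -/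
def FinitelyIrreducible : Prop :=
  ∃ Λ : Finset (List S), ∀ v w : List S, Admissible A v → Admissible A w →
    ∃ l ∈ Λ, Admissible A (v ++ l ++ w)

/-- Finite primitiveness. -/
def FinitelyPrimitive : Prop :=
  ∃ Λ : Finset (List S), (∃ N : ℕ, ∀ l ∈ Λ, l.length = N) ∧
    ∀ v w : List S, Admissible A v → Admissible A w →
      ∃ l ∈ Λ, Admissible A (v ++ l ++ w)

/-- Topological transitivity. -/
def TopTransitive : Prop :=
  ∀ a b : S, ∃ n : ℕ, 1 ≤ n ∧
    (cylinder A [a] ∩ (shift A)^[n] ⁻¹' (cylinder A [b])).Nonempty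

/-- Varadhan's functional `Q(ψ) = sup_μ (∫ψ dμ - I(μ))`. -/
noncomputable def varQ {X : Type*} [MeasurableSpace X] (I : ProbabilityMeasure X → EReal)
    (ψ : X → ℝ) : EReal :=
  ⨆ μ : ProbabilityMeasure X, (((∫ x, ψ x ∂(μ : Measure X)) : ℝ) : EReal) - I μ

/-- `φ` is uniformly continuous for the standard metric of the shift space. -/
def UnifCont (φ : Space A → ℝ) : Prop :=
  ∀ ε : ℝ, 0 < ε → ∃ N : ℕ, ∀ x y : Space A, (∀ i < N, x.1 i = y.1 i) → |φ x - φ y| ≤ ε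

/-- `φ` is bounded. -/
def Bdd (φ : Space A → ℝ) : Prop := ∃ C : ℝ, ∀ x : Space A, |φ x| ≤ C

end CMS

open CMS in

/-!
The Gibbs bounds for a one-symbol cylinder `[a]` give `c₀⁻¹ e^{φ(x) - P} ≤ μ[a] ≤ 1` for every
`x ∈ [a]`, so `φ ≤ log c₀ + P`. The cylinders `[a]`, `a ∈ S`, are infinitely many disjoint sets of
total mass at most one, so `μ[a]` and with it `e^{φ}` on `[a]` (nonempty, as no row of `A`
vanishes) become arbitrarily small. Finally two points of an `n`-cylinder `[w]` both have `μ[w]`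
within a factor `c₀` of `e^{S_nφ - Pn}`, so their Birkhoff sums differ by at most `2 log c₀`.
-/

open Function

theorem MeasureTheory.exists_measure_lt_of_pairwise_disjoint {α ι : Type*} [Infinite ι]
    [MeasurableSpace α] (μ : Measure α) [IsFiniteMeasure μ] {ε : ℝ≥0∞} (hε : 0 < ε)
    {s : ι → Set α} (hs : ∀ i, MeasurableSet (s i)) (hdisj : Pairwise (Disjoint on s)) :
    ∃ i, μ (s i) < ε := by
  by_contra! h
  have hfin := Measure.finite_const_le_meas_of_disjoint_iUnion μ hε hs hdisj (measure_ne_top μ _)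
  simp only [h, Set.ofPred_true] at hfin
  exact Set.infinite_univ hfin

theorem Real.sub_le_two_mul_log_of_inv_mul_exp_le {a s t : ℝ} (ha : 0 < a)
    (h : a⁻¹ * Real.exp s ≤ a * Real.exp t) : s - t ≤ 2 * Real.log a := by
  rw [← Real.exp_le_exp, Real.exp_sub, two_mul, Real.exp_add, Real.exp_log ha,
    div_le_iff₀ (Real.exp_pos t), mul_assoc, ← inv_mul_le_iff₀ ha]
  exact h

namespace CMS

variable {S : Type*} {A : S → S → Prop}

theorem birkhoff_one {X : Type*} (T : X → X) (φ : X → ℝ) (x : X) : birkhoff T φ 1 x = φ x := by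
  simp [birkhoff]

theorem word_one (x : Space A) : word x 1 = [x.1 0] := rfl

theorem word_eq_of_mem_cylinder {w : List S} {n : ℕ} (hlen : w.length = n) {x : Space A}
    (hx : x ∈ cylinder A w) : word x n = w := by
  subst hlen
  refine List.ext_getElem (by simp [word]) fun i hi _ => ?_
  simpa [word] using hx ⟨i, by simpa [word] using hi⟩

theorem mem_cylinder_singleton {x : Space A} {a : S} : x ∈ cylinder A [a] ↔ x.1 0 = a := by
  simp [cylinder]

theorem cylinder_singleton (a : S) : cylinder A [a] = (fun x : Space A => x.1 0) ⁻¹' {a} :=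
  Set.ext fun _ => mem_cylinder_singleton

theorem measurableSet_cylinder_singleton [TopologicalSpace S] [DiscreteTopology S] (a : S) :
    MeasurableSet (cylinder A [a]) := by
  have hopen : IsOpen (cylinder A [a]) := by
    rw [cylinder_singleton]
    exact (isOpen_discrete {a}).preimage ((continuous_apply 0).comp continuous_subtype_val)
  exact hopen.measurableSet

theorem pairwise_disjoint_cylinder_singleton :
    Pairwise (Disjoint on fun a : S => cylinder A [a]) := by
  simpa only [cylinder_singleton] using pairwise_disjoint_fiber fun x : Space A => x.1 0

theorem exists_mem_cylinder_singleton (hA : ∀ a, ∃ b, A a b) (a : S) :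
    ∃ x : Space A, x ∈ cylinder A [a] := by
  choose f hf using hA
  refine ⟨⟨fun i => f^[i] a, fun i => ?_⟩, mem_cylinder_singleton.2 rfl⟩
  show A (f^[i] a) (f^[i + 1] a)
  rw [iterate_succ_apply']
  exact hf _

namespace IsGibbsWith

variable [TopologicalSpace S] {φ : Space A → ℝ} {μ : Measure (Space A)} {c₀ P : ℝ}

theorem le_log_add [IsProbabilityMeasure μ] (hμ : IsGibbsWith A φ μ c₀ P) (hc₀ : 0 < c₀)
    (x : Space A) : φ x ≤ Real.log c₀ + P := by
  have hle : c₀⁻¹ * Real.exp (-P + φ x) ≤ 1 := by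
    simpa [birkhoff_one] using
      (hμ 1 le_rfl x).1.trans measureReal_le_one
  rw [inv_mul_le_iff₀ hc₀, mul_one, ← Real.le_log_iff_exp_le hc₀] at hle
  linarith

theorem exists_lt [DiscreteTopology S] [Infinite S] [IsProbabilityMeasure μ]
    (hμ : IsGibbsWith A φ μ c₀ P) (hc₀ : 0 < c₀) (hA : ∀ a, ∃ b, A a b) (C : ℝ) :
    ∃ x, φ x < C := by
  obtain ⟨a, ha⟩ : ∃ a : S, μ (cylinder A [a]) < ENNReal.ofReal (c₀⁻¹ * Real.exp (-P + C)) :=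
    exists_measure_lt_of_pairwise_disjoint μ (ENNReal.ofReal_pos.2 (by positivity))
      measurableSet_cylinder_singleton pairwise_disjoint_cylinder_singleton
  obtain ⟨x, hx⟩ := exists_mem_cylinder_singleton hA a
  have hlow := (hμ 1 le_rfl x).1
  simp only [word_one, mem_cylinder_singleton.1 hx, Nat.cast_one, mul_one, birkhoff_one] at hlow
  have hlt := lt_of_mul_lt_mul_left (hlow.trans_lt (ENNReal.toReal_lt_of_lt_ofReal ha))
    (inv_nonneg.2 hc₀.le)
  exact ⟨x, by linarith [Real.exp_lt_exp.1 hlt]⟩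

theorem birkhoff_sub_le (hμ : IsGibbsWith A φ μ c₀ P) (hc₀ : 0 < c₀) {n : ℕ} (hn : 1 ≤ n)
    {w : List S} (hlen : w.length = n) {x y : Space A} (hx : x ∈ cylinder A w)
    (hy : y ∈ cylinder A w) :
    birkhoff (shift A) φ n x - birkhoff (shift A) φ n y ≤ 2 * Real.log c₀ := by
  have hlow := (hμ n hn x).1
  have hup := (hμ n hn y).2
  rw [word_eq_of_mem_cylinder hlen hx] at hlow
  rw [word_eq_of_mem_cylinder hlen hy] at hup
  simpa using Real.sub_le_two_mul_log_of_inv_mul_exp_le hc₀ (hlow.trans hup)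

end IsGibbsWith

end CMS

open CMS in
theorem gibbs_potential_properties_general {S : Type*} [Infinite S] [TopologicalSpace S]
    [DiscreteTopology S]
    (A : S → S → Prop) (hA : NoZeroRowCol A)
    (φ : Space A → ℝ)
    (hex : ∃ μ : Measure (Space A), IsProbabilityMeasure μ ∧ IsGibbs A φ μ) :
    (∃ C : ℝ, ∀ x : Space A, φ x ≤ C) ∧
    (∀ C : ℝ, ∃ x : Space A, φ x < C) ∧
    ∃ C : ℝ, ∀ n : ℕ, 1 ≤ n → ∀ w : List S, Admissible A w → w.length = n →
      ∀ x ∈ cylinder A w, ∀ y ∈ cylinder A w,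
        birkhoff (shift A) φ n x - birkhoff (shift A) φ n y ≤ C := by
  obtain ⟨μ, hprob, c₀, P, hc₀, hμ⟩ := hex
  have hc₀pos : 0 < c₀ := zero_lt_one.trans_le hc₀
  exact ⟨⟨_, hμ.le_log_add hc₀pos⟩, hμ.exists_lt hc₀pos hA.1,
    ⟨_, fun _ hn _ _ hlen _ hx _ hy => hμ.birkhoff_sub_le hc₀pos hn hlen hx hy⟩⟩

open CMS in
/-- If a countable Markov shift over an infinite alphabet admits a Gibbs state for a measurable
potential `φ`, then `sup φ < ∞`, `inf φ = -∞`, and `sup_{n ≥ 1} D_n(φ) < ∞`. -/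
theorem gibbs_potential_properties {S : Type*} [Countable S] [Infinite S] [TopologicalSpace S]
    [DiscreteTopology S]
    (A : S → S → Prop) (hA : NoZeroRowCol A)
    (φ : Space A → ℝ) (hφ : Measurable φ)
    (hex : ∃ μ : Measure (Space A), IsProbabilityMeasure μ ∧ IsGibbs A φ μ) :
    (∃ C : ℝ, ∀ x : Space A, φ x ≤ C) ∧
    (∀ C : ℝ, ∃ x : Space A, φ x < C) ∧
    ∃ C : ℝ, ∀ n : ℕ, 1 ≤ n → ∀ w : List S, Admissible A w → w.length = n →
      ∀ x ∈ cylinder A w, ∀ y ∈ cylinder A w,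
        birkhoff (shift A) φ n x - birkhoff (shift A) φ n y ≤ C :=
  gibbs_potential_properties_general A hA φ hex
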